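/- Let R be a commutative ring and S, c_1, c_2 ∈ R. In R[[t]], the coefficient of t^3 in 12(c_1 t + (6c_1S − 5S^2)t^2) · ((1 + St)(1 + 6c_1 t − 5St))^{-1} · (1 + c_1 t + c_2 t^2) equals 12(c_1c_2 + 30c_1^3 − 80c_1^2S + 70c_1S^2 − 20S^3). -/

import Mathlib

open PowerSeries

/-! The denominator is `1 + a t + b t²` with `a = 6c₁ - 4S`, `b = 6c₁S - 5S²`. If `g = f · u⁻¹` for
such a `u`, then comparing coefficients in `g · u = f` gives `gₙ + a gₙ₋₁ + b gₙ₋₂ = fₙ`, which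
determines `g₃` from `f₀, …, f₃`; the numerator here is an explicit quartic. -/

section QuadraticDenominator

variable {R : Type*} [CommRing R] (a b : R) (f : R⟦X⟧)

theorem coeff_zero_mul_one_add_C_mul_X_add_C_mul_X_sq :
    coeff 0 (f * (1 + C a * X + C b * X ^ 2)) = coeff 0 f := by
  simp [mul_add]

theorem coeff_one_mul_one_add_C_mul_X_add_C_mul_X_sq :
    coeff 1 (f * (1 + C a * X + C b * X ^ 2)) = coeff 1 f + a * coeff 0 f := by
  simp [mul_add, mul_left_comm f, coeff_C_mul, coeff_mul_X_pow']

theorem coeff_add_two_mul_one_add_C_mul_X_add_C_mul_X_sq (n : ℕ) :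
    coeff (n + 2) (f * (1 + C a * X + C b * X ^ 2)) =
      coeff (n + 2) f + a * coeff (n + 1) f + b * coeff n f := by
  simp [mul_add, mul_left_comm f, coeff_C_mul]

theorem coeff_three_mul_inverse_one_add_C_mul_X_add_C_mul_X_sq :
    coeff 3 (f * Ring.inverse (1 + C a * X + C b * X ^ 2)) =
      coeff 3 f - a * coeff 2 f + (a ^ 2 - b) * coeff 1 f - (a ^ 3 - 2 * a * b) * coeff 0 f := by
  set u : R⟦X⟧ := 1 + C a * X + C b * X ^ 2
  have hu : IsUnit u := by simp [u, isUnit_iff_constantCoeff]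
  set g := f * Ring.inverse u
  have hf : f = g * u := by rw [mul_assoc, Ring.inverse_mul_cancel u hu, mul_one]
  rw [hf, coeff_add_two_mul_one_add_C_mul_X_add_C_mul_X_sq,
    coeff_add_two_mul_one_add_C_mul_X_add_C_mul_X_sq,
    coeff_one_mul_one_add_C_mul_X_add_C_mul_X_sq, coeff_zero_mul_one_add_C_mul_X_add_C_mul_X_sq]
  ring

end QuadraticDenominator

/-- Calabi–Yau specialization `L = c₁` of the E₈-model generating function:
coefficient of `t^3`, the Euler characteristic of the elliptically fibered
Calabi–Yau fourfold E₈-model. -/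
theorem euler_e8_CY4 {R : Type*} [CommRing R] (S c₁ c₂ : R) :
    (PowerSeries.coeff (R := R) 3)
      (12 * (C (R := R) c₁ * X + (6 * C (R := R) c₁ * C (R := R) S - 5 * C (R := R) S ^ 2) * X ^ 2) *
        Ring.inverse ((1 + C (R := R) S * X) * (1 + 6 * C (R := R) c₁ * X - 5 * C (R := R) S * X)) *
        (1 + C (R := R) c₁ * X + C (R := R) c₂ * X ^ 2))
      = 12 * (c₁ * c₂ + 30 * c₁ ^ 3 - 80 * c₁ ^ 2 * S + 70 * c₁ * S ^ 2
          - 20 * S ^ 3) := by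
  have hden : (1 + C S * X) * (1 + 6 * C c₁ * X - 5 * C S * X) =
      1 + C (6 * c₁ - 4 * S) * X + C (6 * c₁ * S - 5 * S ^ 2) * X ^ 2 := by
    simp only [map_sub, map_mul, map_pow, map_ofNat]
    ring
  have hnum : 12 * (C c₁ * X + (6 * C c₁ * C S - 5 * C S ^ 2) * X ^ 2) *
      (1 + C c₁ * X + C c₂ * X ^ 2) =
      C (12 * c₁) * X ^ 1 + C (12 * (6 * c₁ * S - 5 * S ^ 2 + c₁ ^ 2)) * X ^ 2
        + C (12 * (c₁ * c₂ + c₁ * (6 * c₁ * S - 5 * S ^ 2))) * X ^ 3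
        + C (12 * c₂ * (6 * c₁ * S - 5 * S ^ 2)) * X ^ 4 := by
    simp only [map_add, map_sub, map_mul, map_pow, map_ofNat]
    ring
  rw [hden, mul_right_comm, hnum, coeff_three_mul_inverse_one_add_C_mul_X_add_C_mul_X_sq]
  simp only [map_add, coeff_C_mul_X_pow]
  norm_num
  ring
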